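/- Let R be a commutative ring and let A = (a_{ij}), B = (b_{ij}), C = (c_{ij}) be infinite matrices with entries in R satisfying ∑_{j=0}^n a_{ij} b_{ℓ,n-j} = c_{i+ℓ,n} for all i, ℓ, n ≥ 0, with a_{00} and b_{00} invertible in R. If A and B are lower-triangular in row 0, and in addition at least one of A, B, C is lower-triangular in row 1, then there exist α, β, κ, λ ∈ R with α and β invertible such that a_{ij} = α κ^{i−j} λ^j C(i,j), b_{ij} = β κ^{i−j} λ^j C(i,j), and c_{ij} = αβ κ^{i−j} λ^j C(i,j) for all i ≥ j ≥ 0, and a_{ij} = b_{ij} = c_{ij} = 0 for j > i. -/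

import Mathlib

noncomputable section

open PowerSeries

/-- The `i`-th row-generating series `Mᵢ(u) = ∑_j m_{ij} uʲ ∈ R[[u]]` of an
infinite matrix `M = (m_{ij})_{i,j ≥ 0}` with entries in `R`. -/
def rowGen {R : Type*} [CommRing R] (m : ℕ → ℕ → R) (i : ℕ) : PowerSeries R :=
  PowerSeries.mk (m i)

/-!
Read the convolution identity as `Aᵢ(u) Bₗ(u) = C_{i+ℓ}(u)` for the row-generating series. Since
rows `0` of `A` and `B` are the constants `a₀₀` and `b₀₀`, every row of `B` and `C` is a unit
multiple of the same row of `A`, and `E := a₀₀⁻¹ A₁` satisfies `Aᵢ = a₀₀ Eⁱ`. Triangularity of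
one row `1` forces `E = κ + λu`, and the binomial theorem gives the entries.
-/

theorem eq_mul_pow_of_mul_apply_succ {M : Type*} [CommMonoid M] {f : ℕ → M} {u v : M}
    (hvu : v * u = 1) (h0 : f 0 = u) (hsucc : ∀ i, u * f (i + 1) = f i * f 1) (i : ℕ) :
    f i = u * (v * f 1) ^ i := by
  induction i with
  | zero => simp [h0]
  | succ i ih =>
    calc f (i + 1) = v * (u * f (i + 1)) := by rw [← mul_assoc, hvu, one_mul]
      _ = (v * u) * (v * f 1) ^ i * f 1 := by rw [hsucc, ih]; ac_rfl
      _ = u * (v * f 1) ^ (i + 1) := by rw [pow_succ]; ac_rfl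

namespace PowerSeries

variable {R : Type*} [CommRing R]

theorem coeff_C_add_C_mul_X_pow (κ lam : R) (i j : ℕ) :
    coeff j ((C κ + C lam * X) ^ i) =
      if j ≤ i then κ ^ (i - j) * lam ^ j * (i.choose j : R) else 0 := by
  have hterm (m : ℕ) : (C lam * X) ^ m * C κ ^ (i - m) * (i.choose m : R⟦X⟧) =
      C (κ ^ (i - m) * lam ^ m * (i.choose m : R)) * X ^ m := by
    simp only [mul_pow, map_mul, map_pow, map_natCast]
    ring
  rw [add_comm, add_pow, map_sum]
  simp only [hterm, coeff_C_mul_X_pow, Finset.sum_ite_eq, Finset.mem_range, Nat.lt_succ_iff]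

theorem eq_C_add_C_mul_X_of_coeff_eq_zero {f : R⟦X⟧} (hf : ∀ j, 1 < j → coeff j f = 0) :
    f = C (coeff 0 f) + C (coeff 1 f) * X := by
  ext (_ | _ | j)
  · simp
  · simp
  · simp [hf (j + 2) (by omega)]

end PowerSeries

section RowGen

variable {R : Type*} [CommRing R]

@[simp]
theorem coeff_rowGen (m : ℕ → ℕ → R) (i j : ℕ) : coeff j (rowGen m i) = m i j :=
  coeff_mk _ _

theorem rowGen_zero_eq_C {m : ℕ → ℕ → R} (h : ∀ j, 0 < j → m 0 j = 0) :
    rowGen m 0 = C (m 0 0) := by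
  ext (_ | j)
  · simp
  · simp [h (j + 1) j.succ_pos]

theorem rowGen_mul_rowGen {a b c : ℕ → ℕ → R}
    (hconv : ∀ i l n, ∑ j ∈ Finset.range (n + 1), a i j * b l (n - j) = c (i + l) n)
    (i l : ℕ) : rowGen a i * rowGen b l = rowGen c (i + l) := by
  ext n
  rw [coeff_mul, Finset.Nat.sum_antidiagonal_eq_sum_range_succ_mk]
  simpa using hconv i l n

theorem coeff_eq_zero_of_rowGen_one_eq {m : ℕ → ℕ → R} {u : R} (hu : IsUnit u) {E : R⟦X⟧}
    (hE : rowGen m 1 = C u * E) {j : ℕ} (hm : m 1 j = 0) : coeff j E = 0 := by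
  rw [← hu.mul_right_eq_zero, ← coeff_C_mul, ← hE, coeff_rowGen, hm]

theorem exists_rowGen_eq_C_mul_pow {a b c : ℕ → ℕ → R}
    (hconv : ∀ i l n, ∑ j ∈ Finset.range (n + 1), a i j * b l (n - j) = c (i + l) n)
    {α β : Rˣ} (hα : (α : R) = a 0 0) (hβ : (β : R) = b 0 0)
    (haRow0 : ∀ j, 0 < j → a 0 j = 0) (hbRow0 : ∀ j, 0 < j → b 0 j = 0) :
    ∃ E : R⟦X⟧, (∀ i, rowGen a i = C (α : R) * E ^ i) ∧ (∀ i, rowGen b i = C (β : R) * E ^ i) ∧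
      ∀ i, rowGen c i = C ((α : R) * β) * E ^ i := by
  have hmul := rowGen_mul_rowGen hconv
  have hA0 : rowGen a 0 = C (α : R) := by rw [rowGen_zero_eq_C haRow0, hα]
  have hB0 : rowGen b 0 = C (β : R) := by rw [rowGen_zero_eq_C hbRow0, hβ]
  have hCA (i : ℕ) : rowGen c i = C (β : R) * rowGen a i := by
    simpa [hB0, mul_comm] using (hmul i 0).symm
  have hCB (l : ℕ) : rowGen c l = C (α : R) * rowGen b l := by
    simpa [hA0] using (hmul 0 l).symm
  have hCβ : IsUnit (C (β : R) : R⟦X⟧) := β.isUnit.map C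
  have hAsucc (i : ℕ) : C (α : R) * rowGen a (i + 1) = rowGen a i * rowGen a 1 := by
    apply hCβ.mul_left_cancel
    calc C (β : R) * (C (α : R) * rowGen a (i + 1)) = C (α : R) * rowGen c (i + 1) := by
          rw [hCA]; ring
      _ = rowGen a i * (C (α : R) * rowGen b 1) := by rw [← hmul]; ring
      _ = C (β : R) * (rowGen a i * rowGen a 1) := by rw [← hCB, hCA]; ring
  have hvu : C (↑α⁻¹ : R) * C (α : R) = 1 := by rw [← map_mul, α.inv_mul, map_one]
  have hA := eq_mul_pow_of_mul_apply_succ hvu hA0 hAsucc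
  refine ⟨C (↑α⁻¹ : R) * rowGen a 1, hA, fun i => ?_, fun i => by rw [hCA, hA, map_mul]; ring⟩
  apply (α.isUnit.map C).mul_left_cancel
  rw [← hCB, hCA, hA]
  ring

end RowGen

/-- Let `R` be a commutative ring and `A, B, C` infinite
matrices over `R` satisfying `∑_{j=0}^n a_{ij} b_{ℓ,n-j} = c_{i+ℓ,n}` for all
`i, ℓ, n ≥ 0`, with `a₀₀`, `b₀₀` invertible.  If `A` and `B` are
lower-triangular in row `0`, and at least one of `A, B, C` is lower-triangular
in row `1`, then there exist `α, β, κ, λ ∈ R` with `α, β` invertible such that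
`a_{ij} = α κ^{i-j} λ^j C(i,j)`, `b_{ij} = β κ^{i-j} λ^j C(i,j)` and
`c_{ij} = αβ κ^{i-j} λ^j C(i,j)` for all `i ≥ j ≥ 0`, and
`a_{ij} = b_{ij} = c_{ij} = 0` for `j > i`. -/
theorem pascal_like_triangular_classification {R : Type*} [CommRing R]
    (a b c : ℕ → ℕ → R)
    (hconv : ∀ i l n, ∑ j ∈ Finset.range (n + 1), a i j * b l (n - j) = c (i + l) n)
    (ha00 : IsUnit (a 0 0)) (hb00 : IsUnit (b 0 0))
    (haRow0 : ∀ j, 0 < j → a 0 j = 0) (hbRow0 : ∀ j, 0 < j → b 0 j = 0)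
    (hRow1 : (∀ j, 1 < j → a 1 j = 0) ∨ (∀ j, 1 < j → b 1 j = 0) ∨
      (∀ j, 1 < j → c 1 j = 0)) :
    ∃ α β κ lam : R,
      IsUnit α ∧ IsUnit β ∧
      (∀ i j, j ≤ i →
        a i j = α * κ ^ (i - j) * lam ^ j * (i.choose j : R) ∧
        b i j = β * κ ^ (i - j) * lam ^ j * (i.choose j : R) ∧
        c i j = α * β * κ ^ (i - j) * lam ^ j * (i.choose j : R)) ∧
      (∀ i j, i < j → a i j = 0 ∧ b i j = 0 ∧ c i j = 0) := by
  obtain ⟨α, hα⟩ := ha00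
  obtain ⟨β, hβ⟩ := hb00
  obtain ⟨E, hA, hB, hC⟩ := exists_rowGen_eq_C_mul_pow hconv hα hβ haRow0 hbRow0
  have hE : ∀ j, 1 < j → coeff j E = 0 := by
    rcases hRow1 with h | h | h <;> intro j hj
    · exact coeff_eq_zero_of_rowGen_one_eq α.isUnit (by rw [hA, pow_one]) (h j hj)
    · exact coeff_eq_zero_of_rowGen_one_eq β.isUnit (by rw [hB, pow_one]) (h j hj)
    · exact coeff_eq_zero_of_rowGen_one_eq (α * β).isUnit (by rw [hC, pow_one]; rfl) (h j hj)
  set κ := coeff 0 E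
  set lam := coeff 1 E
  have hentry {m : ℕ → ℕ → R} {u : R} (hm : ∀ i, rowGen m i = C u * E ^ i) (i j : ℕ) :
      m i j = u * if j ≤ i then κ ^ (i - j) * lam ^ j * (i.choose j : R) else 0 := by
    rw [← coeff_rowGen m, hm, coeff_C_mul, eq_C_add_C_mul_X_of_coeff_eq_zero hE,
      coeff_C_add_C_mul_X_pow]
  refine ⟨α, β, κ, lam, α.isUnit, β.isUnit, fun i j hij => ?_, fun i j hij => ?_⟩
  · simp only [hentry hA, hentry hB, hentry hC, if_pos hij, mul_assoc, and_self]
  · simp [hentry hA, hentry hB, hentry hC, not_le.mpr hij]
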